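/- Let Ω be a locally compact separable metric space and m : BC(Ω) → ℂ a mean (positive linear functional with m(1) = 1). Let m₀ be the positive Borel measure representing m on C_c(Ω). If m(∞) := 1 − sup{m(f) : f ∈ C_c⁺(Ω), f ≤ 1} equals 0, then m(f) = ∫ f dm₀ for every f ∈ BC(Ω). -/

import Mathlib

/-!
For a positive functional `L` on `BC(Ω)` and `0 ≤ g ≤ 1`, comparing `|f - f g|` with
`‖f‖ (1 - g)` gives `‖L (f - f g)‖ ≤ ‖f‖ (L 1 - L g)`. Both `m` and `f ↦ ∫ f dm₀` are positive,
and they agree on `f g` when `g` has compact support. Since `m(∞) = 0`, there are such `g` with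
`m g` arbitrarily close to `1`; for these `L 1 - L g` is small for both functionals, provided
`m₀ Ω ≤ 1`. That bound holds because `m₀ K ≤ ∫ φ dm₀ = m φ ≤ 1` for a Urysohn function `φ ≥ 1_K`,
and `Ω` is σ-compact.
-/

open MeasureTheory BoundedContinuousFunction

/-- `f` is a continuous compactly supported function with `0 ≤ f ≤ 1` (viewed inside
the complex-valued bounded continuous functions). -/
def CcPosLeOne {α : Type*} [TopologicalSpace α] (f : α →ᵇ ℂ) : Prop :=
  HasCompactSupport ⇑f ∧ ∀ x, (f x).im = 0 ∧ 0 ≤ (f x).re ∧ (f x).re ≤ 1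

open scoped ComplexOrder

namespace BoundedContinuousFunction

variable {Ω : Type*} [TopologicalSpace Ω]

noncomputable def re (k : Ω →ᵇ ℂ) : Ω →ᵇ ℂ :=
  (Complex.ofRealCLM.comp Complex.reCLM).compLeftContinuousBounded Ω k

noncomputable def im (k : Ω →ᵇ ℂ) : Ω →ᵇ ℂ :=
  (Complex.ofRealCLM.comp Complex.imCLM).compLeftContinuousBounded Ω k

@[simp] lemma re_apply (k : Ω →ᵇ ℂ) (x : Ω) : k.re x = (k x).re := rfl

@[simp] lemma im_apply (k : Ω →ᵇ ℂ) (x : Ω) : k.im x = (k x).im := rfl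

lemma re_add_I_smul_im (k : Ω →ᵇ ℂ) : k.re + Complex.I • k.im = k := by
  ext x
  simp [mul_comm Complex.I]

end BoundedContinuousFunction

section PositiveFunctional

variable {Ω : Type*} [TopologicalSpace Ω]

def IsPositiveFunctional (L : (Ω →ᵇ ℂ) →ₗ[ℂ] ℂ) : Prop :=
  ∀ f : Ω →ᵇ ℂ, (∀ x, 0 ≤ f x) → 0 ≤ L f

namespace IsPositiveFunctional

variable {L : (Ω →ᵇ ℂ) →ₗ[ℂ] ℂ} (hL : IsPositiveFunctional L)
include hL

lemma mono {f g : Ω →ᵇ ℂ} (h : ∀ x, f x ≤ g x) : L f ≤ L g := by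
  simpa using hL (g - f) fun x => by simpa using h x

lemma im_eq_zero {f : Ω →ᵇ ℂ} (hf : ∀ x, (f x).im = 0) : (L f).im = 0 := by
  set c : Ω →ᵇ ℂ := (‖f‖ : ℂ) • const Ω 1
  have hc : ∀ x, 0 ≤ c x := fun x => by simp [c]
  have hfc : ∀ x, 0 ≤ (f + c) x := fun x => by
    have := neg_le_of_abs_le ((Complex.abs_re_le_norm (f x)).trans (f.norm_coe_le_norm x))
    rw [Complex.nonneg_iff]
    simp only [c, coe_add, coe_smul, Pi.add_apply, const_apply, smul_eq_mul,
      mul_one, Complex.add_re, Complex.add_im, Complex.ofReal_re, Complex.ofReal_im, hf x]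
    constructor <;> linarith
  rw [show L f = L (f + c) - L c by simp, Complex.sub_im, ← (Complex.nonneg_iff.1 (hL _ hfc)).2,
    ← (Complex.nonneg_iff.1 (hL _ hc)).2, sub_zero]

lemma map_re (k : Ω →ᵇ ℂ) : L k.re = (L k).re := by
  have hre := hL.im_eq_zero (f := k.re) fun x => by simp
  have him := hL.im_eq_zero (f := k.im) fun x => by simp
  conv_rhs => rw [← k.re_add_I_smul_im]
  apply Complex.ext <;> simp [hre, him]

lemma norm_map_le {h u : Ω →ᵇ ℂ} (hu : ∀ x, (‖h x‖ : ℂ) ≤ u x) : (‖L h‖ : ℂ) ≤ L u := by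
  obtain ⟨c, hc, hch⟩ := Complex.exists_norm_eq_mul_self (L h)
  have hre : (‖L h‖ : ℂ) = L (c • h).re := by
    rw [hL.map_re, map_smul, smul_eq_mul, ← hch, Complex.ofReal_re]
  rw [hre]
  refine hL.mono fun x => (Complex.le_def.2 ⟨?_, ?_⟩).trans (hu x)
  · simpa [hc] using Complex.re_le_norm (c * h x)
  · simp

lemma norm_map_sub_mul_le (f : Ω →ᵇ ℂ) {g : Ω →ᵇ ℂ} (hg : ∀ x, g x ≤ 1) :
    ‖L (f - f * g)‖ ≤ ‖f‖ * (L (const Ω 1) - L g).re := by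
  set u : Ω →ᵇ ℂ := (‖f‖ : ℂ) • (const Ω 1 - g)
  have hu : ∀ x, (‖(f - f * g) x‖ : ℂ) ≤ u x := fun x => by
    have h1g : 0 ≤ 1 - g x := sub_nonneg.2 (hg x)
    calc (‖(f - f * g) x‖ : ℂ) = ‖f x‖ * (1 - g x) := by
          rw [coe_sub, coe_mul, Pi.sub_apply, Pi.mul_apply, ← mul_one_sub, norm_mul,
            Complex.ofReal_mul]
          exact congrArg _ (RCLike.norm_of_nonneg' h1g)
      _ ≤ ‖f‖ * (1 - g x) := by gcongr; exact_mod_cast f.norm_coe_le_norm x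
      _ = u x := by simp [u]
  simpa [u, map_sub] using (Complex.le_def.1 (hL.norm_map_le hu)).1

end IsPositiveFunctional

end PositiveFunctional

lemma CcPosLeOne.le_one {Ω : Type*} [TopologicalSpace Ω] {g : Ω →ᵇ ℂ} (hg : CcPosLeOne g)
    (x : Ω) : g x ≤ 1 :=
  Complex.le_def.2 ⟨(hg.2 x).2.2, (hg.2 x).1⟩

lemma exists_ccPosLeOne_re_gt {Ω : Type*} [TopologicalSpace Ω] {m : (Ω →ᵇ ℂ) → ℂ}
    (hsup : sSup {r : ℝ | ∃ f : Ω →ᵇ ℂ, CcPosLeOne f ∧ r = (m f).re} = 1) {ε : ℝ} (hε : 0 < ε) :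
    ∃ g : Ω →ᵇ ℂ, CcPosLeOne g ∧ 1 - ε < (m g).re := by
  have hne : {r : ℝ | ∃ f : Ω →ᵇ ℂ, CcPosLeOne f ∧ r = (m f).re}.Nonempty :=
    Set.nonempty_iff_ne_empty.2 fun h => by simp [h] at hsup
  obtain ⟨_, ⟨g, hg, rfl⟩, hlt⟩ := Real.add_neg_lt_sSup hne (neg_lt_zero.2 hε)
  exact ⟨g, hg, by linarith⟩

lemma MeasureTheory.measure_univ_le_of_forall_isCompact {X : Type*} [TopologicalSpace X]
    [SigmaCompactSpace X] [MeasurableSpace X] (μ : Measure X) {c : ENNReal}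
    (h : ∀ K, IsCompact K → μ K ≤ c) : μ Set.univ ≤ c := by
  rw [← iUnion_compactCovering X,
    Monotone.measure_iUnion fun _ _ hmn => compactCovering_subset X hmn]
  exact iSup_le fun n => h _ (isCompact_compactCovering X n)

namespace BoundedContinuousFunction

variable {Ω : Type*} [TopologicalSpace Ω] [MeasurableSpace Ω] [OpensMeasurableSpace Ω]

noncomputable def integralLinearMap (μ : Measure Ω) [IsFiniteMeasure μ] : (Ω →ᵇ ℂ) →ₗ[ℂ] ℂ where
  toFun f := ∫ x, f x ∂μ
  map_add' f g := integral_add (f.integrable μ) (g.integrable μ)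
  map_smul' c _ := integral_smul c _

variable (μ : Measure Ω) [IsFiniteMeasure μ]

lemma integralLinearMap_apply (f : Ω →ᵇ ℂ) : integralLinearMap μ f = ∫ x, f x ∂μ := rfl

lemma isPositiveFunctional_integralLinearMap : IsPositiveFunctional (integralLinearMap μ) :=
  fun _ hf => integral_nonneg hf

lemma integralLinearMap_const_one : integralLinearMap μ (const Ω 1) = μ.real Set.univ := by
  simp [integralLinearMap_apply]

end BoundedContinuousFunction

section RepresentingMeasure

variable {Ω : Type*} [TopologicalSpace Ω] [MeasurableSpace Ω] {m : (Ω →ᵇ ℂ) →ₗ[ℂ] ℂ}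
  {m₀ : Measure Ω} (hrep : ∀ f : Ω →ᵇ ℂ, HasCompactSupport ⇑f → m f = ∫ x, f x ∂m₀)
include hrep

lemma measure_le_re_map_one_of_isCompact [RegularSpace Ω] [LocallyCompactSpace Ω]
    [OpensMeasurableSpace Ω] (hm : IsPositiveFunctional m) {g₀ : Ω →ᵇ ℂ}
    (hg₀c : HasCompactSupport g₀) (hg₀1 : ∀ x, g₀ x ≤ 1) (hg₀pos : 0 < m g₀)
    {K : Set Ω} (hK : IsCompact K) :
    m₀ K ≤ ENNReal.ofReal (m (const Ω 1)).re := by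
  -- `φ ≥ g₀` forces `m φ ≠ 0`, which excludes the junk value `∫ φ = 0` of a non-integrable `φ`.
  obtain ⟨φ, hφ1, -, hφc, hφ01⟩ := exists_continuous_one_zero_of_isCompact (hK.union hg₀c)
    isClosed_empty (Set.disjoint_empty _)
  set h : Ω →ᵇ ℂ := ofCompactSupport (fun x => (φ x : ℂ)) (by fun_prop)
    (hφc.comp_left Complex.ofReal_zero)
  have hh : ∀ x, h x = φ x := fun _ => rfl
  have hg₀h : ∀ x, g₀ x ≤ h x := fun x => by
    by_cases hx : x ∈ tsupport g₀
    · simpa [hh, hφ1 (Set.mem_union_right _ hx)] using hg₀1 x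
    · simpa [hh, image_eq_zero_of_notMem_tsupport hx] using (hφ01 x).1
  have hmh : m h = ∫ x, h x ∂m₀ := hrep h (hφc.comp_left Complex.ofReal_zero)
  have hint : Integrable h m₀ := by
    by_contra hni
    rw [integral_undef hni] at hmh
    exact (hg₀pos.trans_le (hm.mono hg₀h)).ne' hmh
  have hintφ : Integrable φ m₀ := by simpa [hh] using hint.re
  have hre : (m h).re = ∫ x, φ x ∂m₀ := by
    simpa [hh, hmh] using (integral_re hint).symm
  calc m₀ K = ∫⁻ _ in K, 1 ∂m₀ := (setLIntegral_one K).symm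
    _ ≤ ∫⁻ x in K, ENNReal.ofReal (φ x) ∂m₀ :=
        setLIntegral_mono (by fun_prop) fun x hx => by simp [hφ1 (Set.mem_union_left _ hx)]
    _ ≤ ∫⁻ x, ENNReal.ofReal (φ x) ∂m₀ := setLIntegral_le_lintegral _ _
    _ = ENNReal.ofReal (m h).re := by
        rw [hre, ofReal_integral_eq_lintegral_ofReal hintφ (ae_of_all _ fun x => (hφ01 x).1)]
    _ ≤ ENNReal.ofReal (m (const Ω 1)).re := by
        gcongr
        exact hm.mono fun x => by simpa [hh] using Complex.real_le_real.2 (hφ01 x).2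

lemma norm_map_sub_integral_le [OpensMeasurableSpace Ω] [IsFiniteMeasure m₀]
    (hm : IsPositiveFunctional m) (hone : m (const Ω 1) = 1) (hμ : m₀ Set.univ ≤ 1)
    (f : Ω →ᵇ ℂ) {g : Ω →ᵇ ℂ} (hg : CcPosLeOne g) :
    ‖m f - ∫ x, f x ∂m₀‖ ≤ 2 * ‖f‖ * (1 - (m g).re) := by
  set I := integralLinearMap m₀
  have hg' : m g = I g := hrep g hg.1
  have hsplit : m f - ∫ x, f x ∂m₀ = m (f - f * g) - I (f - f * g) := by
    have hfg : m (f * g) = I (f * g) := hrep _ (by rw [coe_mul]; exact hg.1.mul_left)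
    simp only [map_sub, hfg, I, integralLinearMap_apply]
    ring
  have hI1 : (I (const Ω 1)).re ≤ 1 := by
    simpa [I, integralLinearMap_const_one, measureReal_def] using
      ENNReal.toReal_mono ENNReal.one_ne_top hμ
  calc ‖m f - ∫ x, f x ∂m₀‖ ≤ ‖m (f - f * g)‖ + ‖I (f - f * g)‖ := hsplit ▸ norm_sub_le _ _
    _ ≤ ‖f‖ * (m (const Ω 1) - m g).re + ‖f‖ * (I (const Ω 1) - I g).re :=
        add_le_add (hm.norm_map_sub_mul_le f hg.le_one)
          ((isPositiveFunctional_integralLinearMap m₀).norm_map_sub_mul_le f hg.le_one)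
    _ ≤ 2 * ‖f‖ * (1 - (m g).re) := by
        rw [hone, ← hg', Complex.sub_re, Complex.sub_re, Complex.one_re]
        nlinarith [norm_nonneg f]

end RepresentingMeasure

theorem stmt14 {Ω : Type*} [MetricSpace Ω] [LocallyCompactSpace Ω]
    [TopologicalSpace.SeparableSpace Ω] [MeasurableSpace Ω] [BorelSpace Ω]
    (m : (Ω →ᵇ ℂ) →ₗ[ℂ] ℂ)
    (hpos : ∀ f : Ω →ᵇ ℂ, (∀ x, (f x).im = 0 ∧ 0 ≤ (f x).re) →
      (m f).im = 0 ∧ 0 ≤ (m f).re)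
    (hone : m (const Ω (1 : ℂ)) = 1)
    (m₀ : Measure Ω)
    (hrep : ∀ f : Ω →ᵇ ℂ, HasCompactSupport ⇑f → m f = ∫ x, f x ∂m₀)
    (hminf : sSup {r : ℝ | ∃ f : Ω →ᵇ ℂ, CcPosLeOne f ∧ r = (m f).re} = 1) :
    ∀ f : Ω →ᵇ ℂ, m f = ∫ x, f x ∂m₀ := by
  have hm : IsPositiveFunctional m := fun f hf => by
    have hf' := fun x => Complex.nonneg_iff.1 (hf x)
    obtain ⟨him, hre⟩ := hpos f fun x => ⟨(hf' x).2.symm, (hf' x).1⟩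
    exact Complex.nonneg_iff.2 ⟨hre, him.symm⟩
  obtain ⟨g₀, hg₀, hg₀pos⟩ := exists_ccPosLeOne_re_gt hminf one_pos
  have hmg₀ : 0 < m g₀ :=
    Complex.lt_def.2 ⟨by simpa using hg₀pos, (hm.im_eq_zero fun x => (hg₀.2 x).1).symm⟩
  have hμ : m₀ Set.univ ≤ 1 := measure_univ_le_of_forall_isCompact m₀ fun K hK => by
    simpa [hone] using measure_le_re_map_one_of_isCompact hrep hm hg₀.1 hg₀.le_one hmg₀ hK
  have : IsFiniteMeasure m₀ := ⟨hμ.trans_lt ENNReal.one_lt_top⟩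
  intro f
  refine sub_eq_zero.1 (norm_le_zero_iff.1 (le_of_forall_pos_le_add fun ε hε => ?_))
  obtain ⟨g, hg, hgε⟩ := exists_ccPosLeOne_re_gt hminf (ε := ε / (2 * ‖f‖ + 1)) (by positivity)
  calc ‖m f - ∫ x, f x ∂m₀‖ ≤ 2 * ‖f‖ * (1 - (m g).re) :=
        norm_map_sub_integral_le hrep hm hone hμ f hg
    _ ≤ 2 * ‖f‖ * (ε / (2 * ‖f‖ + 1)) := by gcongr; linarith
    _ ≤ 0 + ε := by
        rw [zero_add, ← mul_div_assoc, div_le_iff₀ (by positivity)]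
        nlinarith
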